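/- In the split argumentation framework of Figure 3 (Example 3), after the moves A; {B1, B2}; {C1, C2}, the opponent's move {E} is an effective move of minimum cardinality (it defeats both C1 and C2), but after the proponent then plays F, the opponent loses; whereas the opponent's alternative effective move {D1, D2} (of larger cardinality) leads to the opponent winning even after the proponent plays F. Concretely, under the grounded semantics with focal argument A: in the framework on {A, B1, B2, C1, C2, E, F} with attacks B1 ≫ A, B2 ≫ A, C1 ≫ B1, C2 ≫ B2, E ≫ C1, E ≫ C2, E ≫ B2, F ≫ B1, the grounded extension accepts A; while in the framework on {A, B1, B2, C1, C2, D1, D2, F} with attacks B1 ≫ A, B2 ≫ A, C1 ≫ B1, C2 ≫ B2, D1 ≫ C1, D2 ≫ C2, F ≫ B1, the grounded extension does not accept A. -/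
import Mathlib


/-- E is conflict-free: no member of E attacks another member of E. -/
def ConflictFree {α : Type*} (att : α → α → Prop) (E : Set α) : Prop :=
  ∀ a ∈ E, ∀ b ∈ E, ¬ att a b

/-- a is defended by E: every attacker of a is attacked by some member of E. -/
def Defends {α : Type*} (att : α → α → Prop) (E : Set α) (a : α) : Prop :=
  ∀ b, att b a → ∃ c ∈ E, att c b

/-- E is a complete extension: conflict-free and equal to the set of arguments it defends. -/
def CompleteExt {α : Type*} (att : α → α → Prop) (E : Set α) : Prop :=
  ConflictFree att E ∧ E = {a | Defends att E a}

/-- E is a stable extension: conflict-free and attacks every argument outside E. -/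
def StableExt {α : Type*} (att : α → α → Prop) (E : Set α) : Prop :=
  ConflictFree att E ∧ ∀ a ∉ E, ∃ b ∈ E, att b a

/-- G is the grounded extension: the least complete extension under inclusion. -/
def IsGrounded {α : Type*} (att : α → α → Prop) (G : Set α) : Prop :=
  CompleteExt att G ∧ ∀ E, CompleteExt att E → G ⊆ E
/-- Restriction versions: framework restricted to the subset S of arguments. -/
def ConflictFreeOn {α : Type*} (S : Set α) (att : α → α → Prop) (E : Set α) : Prop :=
  E ⊆ S ∧ ∀ a ∈ E, ∀ b ∈ E, ¬ att a b

def DefendsOn {α : Type*} (S : Set α) (att : α → α → Prop) (E : Set α) (a : α) : Prop :=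
  ∀ b ∈ S, att b a → ∃ c ∈ E, att c b

def CompleteOn {α : Type*} (S : Set α) (att : α → α → Prop) (E : Set α) : Prop :=
  ConflictFreeOn S att E ∧ E = {a ∈ S | DefendsOn S att E a}

def GroundedOn {α : Type*} (S : Set α) (att : α → α → Prop) (G : Set α) : Prop :=
  CompleteOn S att G ∧ ∀ E, CompleteOn S att E → G ⊆ E

inductive Arg12 : Type
  | A | B1 | B2 | C1 | C2 | D1 | D2 | E | F
deriving DecidableEq

open Arg12 in
/-- Attacks of Figure 3: B1,B2 ≫ A; C1 ≫ B1; C2 ≫ B2; D1 ≫ C1; D2 ≫ C2;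
F ≫ B1; E ≫ B2, C1, C2, D1, D2. -/
def att12 (x y : Arg12) : Prop :=
  (x, y) ∈ [(B1, A), (B2, A), (C1, B1), (C2, B2), (D1, C1), (D2, C2),
            (F, B1), (E, B2), (E, C1), (E, C2), (E, D1), (E, D2)]

open Arg12 in
/-- On {A,B1,B2,C1,C2,E,F} the grounded extension accepts A, while on
{A,B1,B2,C1,C2,D1,D2,F} the grounded extension does not accept A:
minimum-cardinality moves are not dominant. -/
theorem stmt_12 :
    (∀ G : Set Arg12, GroundedOn {A, B1, B2, C1, C2, E, F} att12 G → A ∈ G) ∧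
    (∀ G : Set Arg12, GroundedOn {A, B1, B2, C1, C2, D1, D2, F} att12 G → A ∉ G) := by
  constructor
  · intro G hG
    obtain ⟨⟨hcf, hEq⟩, _⟩ := hG
    have mem : ∀ a : Arg12, a ∈ G ↔ a ∈ ({A, B1, B2, C1, C2, E, F} : Set Arg12) ∧
        DefendsOn {A, B1, B2, C1, C2, E, F} att12 G a := by
      intro a; constructor
      · intro h; rw [hEq] at h; exact h
      · intro h; rw [hEq]; exact h
    have hE : E ∈ G := by
      rw [mem]
      refine ⟨by simp, ?_⟩
      intro b hb hatt
      simp [att12, Prod.ext_iff] at hatt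
    have hF : F ∈ G := by
      rw [mem]
      refine ⟨by simp, ?_⟩
      intro b hb hatt
      simp [att12, Prod.ext_iff] at hatt
    rw [mem]
    refine ⟨by simp, ?_⟩
    intro b hb hatt
    simp [att12, Prod.ext_iff] at hatt
    rcases hatt with rfl | rfl
    · exact ⟨F, hF, by simp [att12]⟩
    · exact ⟨E, hE, by simp [att12]⟩
  · intro G hG hA
    obtain ⟨⟨⟨hsub, hcf⟩, hEq⟩, _⟩ := hG
    have mem : ∀ a : Arg12, a ∈ G ↔ a ∈ ({A, B1, B2, C1, C2, D1, D2, F} : Set Arg12) ∧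
        DefendsOn {A, B1, B2, C1, C2, D1, D2, F} att12 G a := by
      intro a; constructor
      · intro h; rw [hEq] at h; exact h
      · intro h; rw [hEq]; exact h
    have hD2 : D2 ∈ G := by
      rw [mem]
      refine ⟨by simp, ?_⟩
      intro b hb hatt
      simp [att12, Prod.ext_iff] at hatt
      subst hatt
      simp at hb
    have hB2 : B2 ∈ G := by
      rw [mem]
      refine ⟨by simp, ?_⟩
      intro b hb hatt
      simp [att12, Prod.ext_iff] at hatt
      rcases hatt with rfl | rfl
      · exact ⟨D2, hD2, by simp [att12]⟩
      · simp at hb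
    exact hcf B2 hB2 A hA (by simp [att12])
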